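/- For each integer d ≥ 2 set ε_d := (log₂ d)^{−2} and c′_d := ε_d + √(1/3 + ε_d/2). For x₁, …, x_m independent random vectors in S^{d−1}, each distributed according to σ_d, let T(d, m) be the number of triples (i, j, k) of pairwise distinct indices in {1, …, m} with x_i ≠ x_j, |⟨x_i, x_j⟩ − 1/3| ≤ ε_d, and |⟨(x_i − x_j)/‖x_i − x_j‖, x_k⟩ − c′_d| ≤ ε_d. Then for every η > 0 there exists D ∈ ℕ such that for all integers d ≥ D and all integers m ≥ 2^{((1/4)·log₂(27/16) + η)·d}, the expectation satisfies E[T(d, m)] ≥ m. -/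

import Mathlib

/-!
The expected number of solution triples is `m (m - 1) (m - 2) · p`, where `p` is the probability
that three independent uniform points `x, y, z` satisfy the constraints. Integrating out `z` and
then `y`, rotation invariance of `σ` makes `p` a product of two cap measures
`σ {z | |⟪e, z⟫ - 1/3| ≤ ε} · σ {z | |⟪e, z⟫ - c'| ≤ ε}` for any unit vector `e`.

A cap measure is compared with Lebesgue measure: integrating the indicator of
`{(y, z) | ⟪z, y / ‖y‖⟫ ∈ [t - ε, t + ε]}` against `vol|_ball ⊗ σ` in both orders shows that
`σ(cap) · vol(Bᵈ)` is the volume of the cone over the cap inside the unit ball. In the coordinates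
`(y₀, (y₁, …, y_{d-1}))` that cone contains the box `[t(1 - ε/2), t) × {v | s(1 - ε/2) ≤ ‖v‖ < s}`,
`s = √(1 - t²)`, and `vol(Bᵈ) ≤ 2 vol(Bᵈ⁻¹)`; hence `σ(cap) ≥ t ε sᵈ⁻¹ / 8`.

For `t = 1/3` and `t = c'` the product of the two cap bounds is, up to constants,
`ε² (8/9 · (1 - c'²))^((d-1)/2)`, and `8/9 · (1 - c'²) → 16/27` as `c' → 1/√3`. Since
`m² ≥ (27/16)^(d/2) 4^(ηd)`, the quantity `m² p` still grows like `2^(ηd) / d²`.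
-/

open MeasureTheory ProbabilityTheory
open scoped RealInnerProductSpace Classical

/-- `σ` is the uniform (normalized rotation-invariant) probability measure on the unit sphere
`S^{d−1} ⊆ ℝ^d`, viewed as a measure on `ℝ^d` concentrated on the sphere. -/
def IsUniformSphereMeasure (d : ℕ) (σ : Measure (EuclideanSpace ℝ (Fin d))) : Prop :=
  IsProbabilityMeasure σ ∧ σ (Metric.sphere (0 : EuclideanSpace ℝ (Fin d)) 1) = 1 ∧
    ∀ O : EuclideanSpace ℝ (Fin d) ≃ₗᵢ[ℝ] EuclideanSpace ℝ (Fin d), Measure.map (⇑O) σ = σ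

open Finset Metric Filter Topology

section Slabs

variable {E : Type*} [NormedAddCommGroup E] [InnerProductSpace ℝ E]

def slab (u : E) (t ε : ℝ) : Set E := {z | |⟪u, z⟫ - t| ≤ ε}

def sector (w : E) (t ε : ℝ) : Set E := {y | y ∈ ball 0 1 ∧ y ≠ 0 ∧ ‖y‖⁻¹ • y ∈ slab w t ε}

lemma isClosed_slab (u : E) (t ε : ℝ) : IsClosed (slab u t ε) :=
  isClosed_le (by fun_prop) continuous_const

lemma preimage_slab (O : E ≃ₗᵢ[ℝ] E) (v : E) (t ε : ℝ) :
    O ⁻¹' slab (O v) t ε = slab v t ε := by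
  ext z; simp [slab, O.inner_map_map]

lemma preimage_sector (O : E ≃ₗᵢ[ℝ] E) (v : E) (t ε : ℝ) :
    O ⁻¹' sector (O v) t ε = sector v t ε := by
  ext y
  simp [sector, slab, O.norm_map, inner_smul_right, O.inner_map_map]

lemma norm_inv_norm_smul {x : E} (hx : x ≠ 0) : ‖‖x‖⁻¹ • x‖ = 1 :=
  norm_smul_inv_norm (𝕜 := ℝ) hx

lemma exists_linearIsometryEquiv_apply_eq {a b : E} (h : ‖a‖ = ‖b‖) :
    ∃ O : E ≃ₗᵢ[ℝ] E, O a = b :=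
  ⟨(ℝ ∙ (a - b))ᗮ.reflection, Submodule.reflection_sub h⟩

variable [MeasurableSpace E] [BorelSpace E]

lemma measurableSet_slab (u : E) (t ε : ℝ) : MeasurableSet (slab u t ε) :=
  (isClosed_slab u t ε).measurableSet

lemma measure_slab_eq_of_norm_eq {σ : Measure E} (hσ : ∀ O : E ≃ₗᵢ[ℝ] E, σ.map O = σ)
    {u v : E} (h : ‖u‖ = ‖v‖) (t ε : ℝ) : σ (slab u t ε) = σ (slab v t ε) := by
  obtain ⟨O, rfl⟩ := exists_linearIsometryEquiv_apply_eq h.symm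
  rw [← preimage_slab O v, ← Measure.map_apply O.continuous.measurable
    (measurableSet_slab _ t ε), hσ]

lemma measurableSet_sector (w : E) (t ε : ℝ) : MeasurableSet (sector w t ε) :=
  measurableSet_ball.inter <| (measurableSet_singleton 0).compl.inter <|
    (measurable_norm.inv.smul measurable_id) (measurableSet_slab w t ε)

variable [FiniteDimensional ℝ E]

lemma volume_sector_eq_of_norm_eq {v w : E} (h : ‖v‖ = ‖w‖) (t ε : ℝ) :
    volume (sector v t ε) = volume (sector w t ε) := by
  obtain ⟨O, rfl⟩ := exists_linearIsometryEquiv_apply_eq h.symm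
  rw [← preimage_sector O w, O.measurePreserving.measure_preimage
    (measurableSet_sector _ t ε).nullMeasurableSet]

lemma measure_slab_mul_volume_ball [Nontrivial E] {σ : Measure E} [IsProbabilityMeasure σ]
    (hrot : ∀ O : E ≃ₗᵢ[ℝ] E, σ.map O = σ) (hsph : ∀ᵐ z ∂σ, ‖z‖ = 1)
    {u w : E} (hu : ‖u‖ = 1) (hw : ‖w‖ = 1) (t ε : ℝ) :
    σ (slab u t ε) * volume (ball (0 : E) 1) = volume (sector w t ε) := by
  set B : Set E := ball 0 1 \ {0}
  have hB : MeasurableSet B := measurableSet_ball.diff (measurableSet_singleton 0)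
  set C : Set (E × E) := {p | ‖p.1‖⁻¹ • p.1 ∈ slab p.2 t ε}
  have hC : MeasurableSet C :=
    measurableSet_le (f := fun p : E × E ↦ |⟪p.2, ‖p.1‖⁻¹ • p.1⟫ - t|) (by fun_prop)
      measurable_const
  calc σ (slab u t ε) * volume (ball (0 : E) 1)
      = ((volume.restrict B).prod σ) C := by
        rw [Measure.prod_apply hC, setLIntegral_congr_fun hB (g := fun _ ↦ σ (slab u t ε)),
          setLIntegral_const, measure_sdiff_null (measure_singleton 0)]
        intro x hx
        have hslice : Prod.mk x ⁻¹' C = slab (‖x‖⁻¹ • x) t ε := by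
          ext z; simp [C, slab, real_inner_comm]
        show σ _ = _
        rw [hslice, measure_slab_eq_of_norm_eq hrot ((norm_inv_norm_smul hx.2).trans hu.symm)]
    _ = volume (sector w t ε) := by
        rw [Measure.prod_apply_symm hC]
        have hae : ∀ᵐ z ∂σ, volume.restrict B ((fun x ↦ (x, z)) ⁻¹' C) = volume (sector w t ε) :=
          hsph.mono fun z hz ↦ by
            have hslice : (fun x ↦ (x, z)) ⁻¹' C ∩ B = sector z t ε := by
              ext y; simp [C, B, sector]; tauto
            rw [Measure.restrict_apply' hB, hslice, volume_sector_eq_of_norm_eq (hz.trans hw.symm)]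
        rw [lintegral_congr_ae hae, lintegral_const, measure_univ, mul_one]

def solutionSet (a c ε : ℝ) : Set ((E × E) × E) :=
  {p | p.1.1 ≠ p.1.2 ∧ p.1.2 ∈ slab p.1.1 a ε ∧
    p.2 ∈ slab (‖p.1.1 - p.1.2‖⁻¹ • (p.1.1 - p.1.2)) c ε}

lemma measurableSet_solutionSet (a c ε : ℝ) : MeasurableSet (solutionSet (E := E) a c ε) :=
  (isClosed_eq (by fun_prop) (by fun_prop)).measurableSet.compl.inter <|
    (measurableSet_le (by fun_prop) measurable_const).inter
      (measurableSet_le (by fun_prop) measurable_const)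

lemma prod_prod_apply_solutionSet {σ : Measure E} [IsProbabilityMeasure σ]
    (hrot : ∀ O : E ≃ₗᵢ[ℝ] E, σ.map O = σ) (hsph : ∀ᵐ z ∂σ, ‖z‖ = 1) {e : E} (he : ‖e‖ = 1)
    {a c ε : ℝ} (haε : a + ε < 1) :
    (σ.prod σ).prod σ (solutionSet a c ε) = σ (slab e a ε) * σ (slab e c ε) := by
  set A : Set (E × E) := {p | p.1 ≠ p.2 ∧ p.2 ∈ slab p.1 a ε}
  have hA : MeasurableSet A :=
    (isClosed_eq (by fun_prop) (by fun_prop)).measurableSet.compl.inter <|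
      measurableSet_le (by fun_prop) measurable_const
  have hslice (p : E × E) :
      σ (Prod.mk p ⁻¹' solutionSet a c ε) = A.indicator (fun _ ↦ σ (slab e c ε)) p := by
    by_cases hp : p ∈ A
    · have hpre : Prod.mk p ⁻¹' solutionSet a c ε = slab (‖p.1 - p.2‖⁻¹ • (p.1 - p.2)) c ε := by
        ext z; simp [solutionSet, hp.1, hp.2]
      rw [Set.indicator_of_mem hp, hpre, measure_slab_eq_of_norm_eq hrot
        ((norm_inv_norm_smul (sub_ne_zero.2 hp.1)).trans he.symm)]
    · have hpre : Prod.mk p ⁻¹' solutionSet a c ε = ∅ := by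
        ext z
        simp only [solutionSet, Set.mem_preimage, Set.mem_ofPred_eq, Set.mem_empty_iff_false,
          iff_false]
        exact fun h ↦ hp ⟨h.1, h.2.1⟩
      rw [Set.indicator_of_notMem hp, hpre, measure_empty]
  have hpair : (σ.prod σ) A = σ (slab e a ε) := by
    have hae : ∀ᵐ x ∂σ, σ (Prod.mk x ⁻¹' A) = σ (slab e a ε) := hsph.mono fun x hx ↦ by
      have hpre : Prod.mk x ⁻¹' A = slab x a ε := by
        ext y
        simp only [A, Set.mem_preimage, Set.mem_ofPred_eq, and_iff_right_iff_imp]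
        -- `⟪x, x⟫ = 1` lies outside `[a - ε, a + ε]`, so `y ≠ x` is automatic.
        rintro hy rfl
        simp only [slab, Set.mem_ofPred_eq, real_inner_self_eq_norm_sq, hx] at hy
        linarith [(abs_le.1 hy).2]
      rw [hpre, measure_slab_eq_of_norm_eq hrot (hx.trans he.symm)]
    rw [Measure.prod_apply hA, lintegral_congr_ae hae, lintegral_const, measure_univ, mul_one]
  rw [Measure.prod_apply (measurableSet_solutionSet a c ε), lintegral_congr hslice,
    lintegral_indicator_const hA, hpair, mul_comm]

end Slabs

section Counting

variable {Ω : Type*} [MeasurableSpace Ω]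

lemma card_filter_pairwise_ne_triple {α : Type*} [Fintype α] [DecidableEq α] :
    #{t : α × α × α | t.1 ≠ t.2.1 ∧ t.1 ≠ t.2.2 ∧ t.2.1 ≠ t.2.2} =
      (Fintype.card α).descFactorial 3 := by
  let e : {t : α × α × α // t.1 ≠ t.2.1 ∧ t.1 ≠ t.2.2 ∧ t.2.1 ≠ t.2.2} ≃ (Fin 3 ↪ α) :=
    { toFun := fun t ↦ ⟨![t.1.1, t.1.2.1, t.1.2.2], by
        obtain ⟨⟨a, b, c⟩, hab, hac, hbc⟩ := t
        intro i j
        fin_cases i <;> fin_cases j <;> simp [hab, hac, hbc, hab.symm, hac.symm, hbc.symm]⟩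
      invFun := fun f ↦ ⟨(f 0, f 1, f 2), by simp [f.injective.ne_iff]⟩
      left_inv := fun t ↦ rfl
      right_inv := fun f ↦ by ext i; fin_cases i <;> rfl }
  rw [← Fintype.card_subtype, Fintype.card_congr e, Fintype.card_embedding_eq,
    Fintype.card_fin]

lemma integral_card_filter_eq_sum {ι : Type*} [Fintype ι] (μ : Measure Ω) [IsFiniteMeasure μ]
    (P : ι → Ω → Prop) [∀ ω, DecidablePred (P · ω)] (hP : ∀ i, MeasurableSet {ω | P i ω}) :
    ∫ ω, (#{i | P i ω} : ℝ) ∂μ = ∑ i, μ.real {ω | P i ω} := by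
  have hcard (ω : Ω) : (#{i | P i ω} : ℝ) = ∑ i, {ω | P i ω}.indicator (fun _ ↦ 1) ω := by
    simp only [card_filter, Nat.cast_sum, Nat.cast_ite, Nat.cast_one, Nat.cast_zero,
      Set.indicator_apply, Set.mem_ofPred_eq]
  simp_rw [hcard]
  rw [integral_finsetSum _ fun i _ ↦ (integrable_const (1 : ℝ)).indicator (hP i)]
  exact sum_congr rfl fun i _ ↦ integral_indicator_one (hP i)

variable {E : Type*} [MeasurableSpace E]

lemma iIndepFun.map_triple_eq_prod {m : ℕ} {μ : Measure Ω} [IsProbabilityMeasure μ]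
    {σ : Measure E} {x : Fin m → Ω → E} (hxm : ∀ i, Measurable (x i))
    (hxd : ∀ i, μ.map (x i) = σ) (hind : iIndepFun x μ) {i j k : Fin m}
    (hij : i ≠ j) (hik : i ≠ k) (hjk : j ≠ k) :
    μ.map (fun ω ↦ ((x i ω, x j ω), x k ω)) = (σ.prod σ).prod σ := by
  have hpair : μ.map (fun ω ↦ (x i ω, x j ω)) = σ.prod σ := by
    rw [(indepFun_iff_map_prod_eq_prod_map_map (hxm i).aemeasurable
      (hxm j).aemeasurable).1 (hind.indepFun hij), hxd i, hxd j]
  rw [(indepFun_iff_map_prod_eq_prod_map_map ((hxm i).prodMk (hxm j)).aemeasurable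
    (hxm k).aemeasurable).1 (hind.indepFun_prodMk hxm i j k hik hjk), hpair, hxd k]

lemma integral_card_distinct_triples_mem {m : ℕ} {μ : Measure Ω} [IsProbabilityMeasure μ]
    {σ : Measure E} {x : Fin m → Ω → E} (hxm : ∀ i, Measurable (x i))
    (hxd : ∀ i, μ.map (x i) = σ) (hind : iIndepFun x μ) {G : Set ((E × E) × E)}
    (hG : MeasurableSet G)
    [∀ ω, DecidablePred fun t : Fin m × Fin m × Fin m ↦
      t.1 ≠ t.2.1 ∧ t.1 ≠ t.2.2 ∧ t.2.1 ≠ t.2.2 ∧ ((x t.1 ω, x t.2.1 ω), x t.2.2 ω) ∈ G] :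
    ∫ ω, (#{t : Fin m × Fin m × Fin m | t.1 ≠ t.2.1 ∧ t.1 ≠ t.2.2 ∧ t.2.1 ≠ t.2.2 ∧
        ((x t.1 ω, x t.2.1 ω), x t.2.2 ω) ∈ G} : ℝ) ∂μ =
      m.descFactorial 3 * ((σ.prod σ).prod σ).real G := by
  have hF (t : Fin m × Fin m × Fin m) : Measurable fun ω ↦ ((x t.1 ω, x t.2.1 ω), x t.2.2 ω) :=
    ((hxm _).prodMk (hxm _)).prodMk (hxm _)
  have hset (t : Fin m × Fin m × Fin m) :
      {ω | t.1 ≠ t.2.1 ∧ t.1 ≠ t.2.2 ∧ t.2.1 ≠ t.2.2 ∧ ((x t.1 ω, x t.2.1 ω), x t.2.2 ω) ∈ G} =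
        if t.1 ≠ t.2.1 ∧ t.1 ≠ t.2.2 ∧ t.2.1 ≠ t.2.2
        then (fun ω ↦ ((x t.1 ω, x t.2.1 ω), x t.2.2 ω)) ⁻¹' G else ∅ := by
    split_ifs with ht
    · ext ω; simp [ht]
    · ext ω; simp only [Set.mem_ofPred_eq, Set.mem_empty_iff_false, iff_false]
      exact fun h ↦ ht ⟨h.1, h.2.1, h.2.2.1⟩
  have hterm (t : Fin m × Fin m × Fin m) :
      μ.real {ω | t.1 ≠ t.2.1 ∧ t.1 ≠ t.2.2 ∧ t.2.1 ≠ t.2.2 ∧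
        ((x t.1 ω, x t.2.1 ω), x t.2.2 ω) ∈ G} =
      if t.1 ≠ t.2.1 ∧ t.1 ≠ t.2.2 ∧ t.2.1 ≠ t.2.2 then ((σ.prod σ).prod σ).real G else 0 := by
    rw [hset]
    split_ifs with ht
    · rw [← map_measureReal_apply (hF t) hG,
        iIndepFun.map_triple_eq_prod hxm hxd hind ht.1 ht.2.1 ht.2.2]
    · exact measureReal_empty
  rw [integral_card_filter_eq_sum μ _ fun t ↦ by rw [hset]; split_ifs; exacts [hF t hG, .empty],
    sum_congr rfl fun t _ ↦ hterm t, sum_ite, sum_const_zero, add_zero, sum_const,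
    card_filter_pairwise_ne_triple, Fintype.card_fin, nsmul_eq_mul]

end Counting

lemma le_descFactorial_three_mul {m : ℕ} {M p : ℝ} (hM : 4 ≤ M) (hm : M ≤ m)
    (hp : 4 ≤ p * M ^ 2) : (m : ℝ) ≤ m.descFactorial 3 * p := by
  have hm4 : 4 ≤ m := by exact_mod_cast hM.trans hm
  obtain ⟨k, rfl⟩ : ∃ k, m = k + 3 := ⟨m - 3, by omega⟩
  have hk : (1 : ℝ) ≤ k := by exact_mod_cast (show 1 ≤ k by omega)
  push_cast at hm ⊢
  have hp0 : 0 < p := by nlinarith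
  have hpk : 4 ≤ p * ((k : ℝ) + 3) ^ 2 := hp.trans (by gcongr)
  simp only [Nat.descFactorial_succ, Nat.descFactorial_zero]
  push_cast
  nlinarith

local notation "𝔼" n => EuclideanSpace ℝ (Fin n)

lemma volume_ball_sdiff_ball {E : Type*} [NormedAddCommGroup E] [NormedSpace ℝ E]
    [MeasurableSpace E] [BorelSpace E] [FiniteDimensional ℝ E] (μ : Measure E)
    [μ.IsAddHaarMeasure] {a b : ℝ} (ha : 0 < a) (hab : a ≤ b) :
    μ (ball 0 b \ ball 0 a) =
      ENNReal.ofReal (b ^ Module.finrank ℝ E - a ^ Module.finrank ℝ E) * μ (ball 0 1) := by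
  rw [measure_sdiff (ball_subset_ball hab) measurableSet_ball.nullMeasurableSet
    measure_ball_lt_top.ne, μ.addHaar_ball_of_pos _ (ha.trans_le hab),
    μ.addHaar_ball_of_pos _ ha, ← ENNReal.sub_mul (fun _ _ ↦ measure_ball_lt_top.ne),
    ENNReal.ofReal_sub _ (by positivity)]

lemma lt_one_and_abs_div_sub_le {t s δ a r N : ℝ} (ht : 0 < t) (hs : 0 < s)
    (hts : t ^ 2 + s ^ 2 = 1) (hδ : 0 ≤ δ) (hδ' : δ ≤ 1 / 2)
    (ha : t * (1 - δ) ≤ a) (ha' : a < t) (hr : s * (1 - δ) ≤ r) (hr' : r < s)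
    (hN : N ^ 2 = a ^ 2 + r ^ 2) (hN0 : 0 ≤ N) :
    N < 1 ∧ |a / N - t| ≤ 2 * δ := by
  have ha0 : 0 < a := lt_of_lt_of_le (by nlinarith) ha
  have hr0 : 0 ≤ r := le_trans (by nlinarith) hr
  have hN1 : N < 1 := by nlinarith
  have ha2 : (t * (1 - δ)) ^ 2 ≤ a ^ 2 := pow_le_pow_left₀ (by nlinarith) ha 2
  have hr2 : (s * (1 - δ)) ^ 2 ≤ r ^ 2 := pow_le_pow_left₀ (by nlinarith) hr 2
  have hNδ : 1 - δ ≤ N :=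
    (pow_le_pow_iff_left₀ (by linarith) hN0 two_ne_zero).1 (by nlinarith)
  have hNpos : 0 < N := by linarith
  refine ⟨hN1, abs_le.2 ⟨?_, ?_⟩⟩
  · rw [le_sub_iff_add_le, le_div_iff₀ hNpos]; nlinarith
  · rw [sub_le_iff_le_add, div_le_iff₀ hNpos]; nlinarith

namespace EuclideanSpace

variable (n : ℕ)

noncomputable def headTail (y : 𝔼 (n + 1)) : ℝ × 𝔼 n := (y 0, WithLp.toLp 2 fun j ↦ y j.succ)

lemma measurePreserving_headTail : MeasurePreserving (headTail n) := by
  have := ((MeasurePreserving.id volume).prod (PiLp.volume_preserving_toLp (Fin n))).comp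
    ((volume_preserving_piFinSuccAbove (fun _ ↦ ℝ) 0).comp
      (EuclideanSpace.volume_preserving_symm_measurableEquiv_toLp (Fin (n + 1))))
  convert this using 1
  · ext y
    · rfl
    · simp [headTail, Fin.tail]
  · exact Measure.volume_eq_prod _ _

lemma norm_sq_eq_headTail (y : 𝔼 (n + 1)) :
    ‖y‖ ^ 2 = (headTail n y).1 ^ 2 + ‖(headTail n y).2‖ ^ 2 := by
  simp [headTail, EuclideanSpace.norm_sq_eq, Fin.sum_univ_succ]

lemma volume_ball_succ_le [NeZero n] :
    volume (ball (0 : 𝔼 (n + 1)) 1) ≤ 2 * volume (ball (0 : 𝔼 n) 1) := by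
  have hsub : ball (0 : 𝔼 (n + 1)) 1 ⊆ headTail n ⁻¹' (Set.Icc (-1) 1 ×ˢ closedBall 0 1) := by
    intro y hy
    have hy' : ‖y‖ ^ 2 < 1 := by
      rw [mem_ball_zero_iff] at hy; nlinarith [norm_nonneg y]
    rw [norm_sq_eq_headTail] at hy'
    refine ⟨abs_le.1 ?_, mem_closedBall_zero_iff.2 ?_⟩
    · exact (sq_le_one_iff_abs_le_one _).1 (by nlinarith [sq_nonneg ‖(headTail n y).2‖])
    · exact (sq_le_one_iff₀ (norm_nonneg _)).1 (by nlinarith [sq_nonneg (headTail n y).1])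
  calc volume (ball (0 : 𝔼 (n + 1)) 1)
      ≤ volume (headTail n ⁻¹' (Set.Icc (-1) 1 ×ˢ closedBall 0 1)) := measure_mono hsub
    _ = 2 * volume (ball (0 : 𝔼 n) 1) := by
      rw [(measurePreserving_headTail n).measure_preimage
        (measurableSet_Icc.prod measurableSet_closedBall).nullMeasurableSet,
        Measure.volume_eq_prod, Measure.prod_prod, Real.volume_Icc,
        Measure.addHaar_closedBall_eq_addHaar_ball]
      norm_num

lemma ofReal_mul_volume_ball_le_volume_sector {t ε : ℝ} (ht0 : 0 < t) (ht1 : t < 1)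
    (hε0 : 0 < ε) (hε1 : ε ≤ 1) :
    ENNReal.ofReal (t * ε / 2 * (√(1 - t ^ 2) ^ n - (√(1 - t ^ 2) * (1 - ε / 2)) ^ n)) *
        volume (ball (0 : 𝔼 n) 1) ≤
      volume (sector (single 0 1 : 𝔼 (n + 1)) t ε) := by
  set s := √(1 - t ^ 2)
  have hs : 0 < s := Real.sqrt_pos.2 (by nlinarith)
  have hts : t ^ 2 + s ^ 2 = 1 := by rw [Real.sq_sqrt (by nlinarith)]; ring
  set T := Set.Ico (t * (1 - ε / 2)) t ×ˢ (ball (0 : 𝔼 n) s \ ball 0 (s * (1 - ε / 2)))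
  have hT : headTail n ⁻¹' T ⊆ sector (single 0 1) t ε := by
    rintro y ⟨⟨ha, ha'⟩, hr', hr⟩
    simp only [mem_ball_zero_iff, not_lt] at hr hr'
    obtain ⟨hN1, hdiv⟩ := lt_one_and_abs_div_sub_le ht0 hs hts (by positivity) (by linarith)
      ha ha' hr hr' (norm_sq_eq_headTail n y) (norm_nonneg y)
    have hy0 : y ≠ 0 := by
      rintro rfl
      have : (0 : ℝ) < t * (1 - ε / 2) := by nlinarith
      simp [headTail] at ha; linarith
    refine ⟨mem_ball_zero_iff.2 hN1, hy0, ?_⟩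
    simpa [slab, EuclideanSpace.inner_single_left, headTail, div_eq_inv_mul] using hdiv
  have hmeas : MeasurableSet T :=
    measurableSet_Ico.prod (measurableSet_ball.diff measurableSet_ball)
  calc _ = volume T := by
        rw [Measure.volume_eq_prod, Measure.prod_prod, Real.volume_Ico,
          volume_ball_sdiff_ball _ (by nlinarith) (by nlinarith), finrank_euclideanSpace_fin,
          ← mul_assoc, ← ENNReal.ofReal_mul (by nlinarith)]
        ring_nf
    _ = volume (headTail n ⁻¹' T) :=
        ((measurePreserving_headTail n).measure_preimage hmeas.nullMeasurableSet).symm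
    _ ≤ _ := measure_mono hT

end EuclideanSpace

lemma IsUniformSphereMeasure.ae_norm_eq_one {d : ℕ} {σ : Measure (𝔼 d)}
    (hσ : IsUniformSphereMeasure d σ) : ∀ᵐ z ∂σ, ‖z‖ = 1 := by
  have := hσ.1
  have hsph : ∀ᵐ z ∂σ, z ∈ sphere (0 : 𝔼 d) 1 :=
    (ae_mem_iff_measure_eq isClosed_sphere.measurableSet.nullMeasurableSet).2
      (by rw [hσ.2.1, measure_univ])
  exact hsph.mono fun z hz ↦ mem_sphere_zero_iff_norm.1 hz

lemma one_sub_pow_le_half {x : ℝ} {n : ℕ} (hx1 : x ≤ 1) (h : 1 ≤ n * x) :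
    (1 - x) ^ n ≤ 1 / 2 :=
  calc (1 - x) ^ n ≤ Real.exp (-x) ^ n := by
        gcongr
        linarith [Real.add_one_le_exp (-x)]
    _ = Real.exp (-(n * x)) := by rw [← Real.exp_nat_mul]; ring_nf
    _ ≤ Real.exp (-1) := Real.exp_le_exp.2 (by linarith)
    _ ≤ 1 / 2 := Real.exp_neg_one_lt_half.le

noncomputable def capLowerBound (n : ℕ) (t ε : ℝ) : ℝ := t * ε / 8 * √(1 - t ^ 2) ^ n

lemma capLowerBound_le_measureReal_slab {n : ℕ} {σ : Measure (𝔼 (n + 1))}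
    (hσ : IsUniformSphereMeasure (n + 1) σ) {u : 𝔼 (n + 1)} (hu : ‖u‖ = 1) {t ε : ℝ}
    (ht0 : 0 < t) (ht1 : t < 1) (hε0 : 0 < ε) (hε1 : ε ≤ 1) (hnε : 2 ≤ n * ε) :
    capLowerBound n t ε ≤ σ.real (slab u t ε) := by
  have := hσ.1
  have : NeZero n := ⟨by rintro rfl; norm_num at hnε⟩
  set A := t * ε / 2 * (√(1 - t ^ 2) ^ n - (√(1 - t ^ 2) * (1 - ε / 2)) ^ n)
  have hV : volume (ball (0 : 𝔼 n) 1) ≠ 0 := (measure_ball_pos _ _ one_pos).ne'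
  have hV' : volume (ball (0 : 𝔼 n) 1) ≠ ⊤ := measure_ball_lt_top.ne
  have hA : ENNReal.ofReal A ≤ 2 * σ (slab u t ε) := by
    refine (ENNReal.mul_le_mul_iff_left hV hV').1 ?_
    calc ENNReal.ofReal A * volume (ball (0 : 𝔼 n) 1)
        ≤ volume (sector (EuclideanSpace.single 0 1 : 𝔼 (n + 1)) t ε) :=
          EuclideanSpace.ofReal_mul_volume_ball_le_volume_sector n ht0 ht1 hε0 hε1
      _ = σ (slab u t ε) * volume (ball (0 : 𝔼 (n + 1)) 1) :=
          (measure_slab_mul_volume_ball hσ.2.2 hσ.ae_norm_eq_one hu (by simp) t ε).symm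
      _ ≤ σ (slab u t ε) * (2 * volume (ball (0 : 𝔼 n) 1)) :=
          mul_le_mul_right (EuclideanSpace.volume_ball_succ_le n) _
      _ = 2 * σ (slab u t ε) * volume (ball (0 : 𝔼 n) 1) := by ring
  have hA' : A ≤ 2 * σ.real (slab u t ε) := by
    simpa [measureReal_def] using (ENNReal.ofReal_le_iff_le_toReal (by finiteness)).1 hA
  have hpow := one_sub_pow_le_half (x := ε / 2) (n := n) (by linarith) (by linarith)
  have hs : 0 ≤ t * ε * √(1 - t ^ 2) ^ n := by positivity
  have hAeq : A = t * ε * √(1 - t ^ 2) ^ n * (1 - (1 - ε / 2) ^ n) / 2 := by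
    simp only [A, mul_pow]; ring
  unfold capLowerBound
  nlinarith

lemma capLowerBound_mul_le_measureReal_solutionSet {n : ℕ} {σ : Measure (𝔼 (n + 1))}
    (hσ : IsUniformSphereMeasure (n + 1) σ) {a c ε : ℝ} (ha : 0 < a) (haε : a + ε < 1)
    (hc : 0 < c) (hcε : c + ε < 1) (hε : 0 < ε) (hnε : 2 ≤ n * ε) :
    capLowerBound n a ε * capLowerBound n c ε ≤
      ((σ.prod σ).prod σ).real (solutionSet a c ε) := by
  have := hσ.1
  have he : ‖(EuclideanSpace.single 0 1 : 𝔼 (n + 1))‖ = 1 := by simp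
  rw [measureReal_def, prod_prod_apply_solutionSet hσ.2.2 hσ.ae_norm_eq_one he haε,
    ENNReal.toReal_mul]
  exact mul_le_mul
    (capLowerBound_le_measureReal_slab hσ he ha (by linarith) hε (by linarith) hnε)
    (capLowerBound_le_measureReal_slab hσ he hc (by linarith) hε (by linarith) hnε)
    (by unfold capLowerBound; positivity) ENNReal.toReal_nonneg

-- The tolerance `ε_d` and the target inner product `c′_d` of the paper.
noncomputable def sieveEps (d : ℕ) : ℝ := ((Real.logb 2 d) ^ 2)⁻¹

noncomputable def sieveCos (d : ℕ) : ℝ := sieveEps d + √(1 / 3 + sieveEps d / 2)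

lemma tendsto_sieveEps : Tendsto sieveEps atTop (𝓝 0) :=
  ((tendsto_pow_atTop two_ne_zero).comp ((Real.tendsto_logb_atTop one_lt_two).comp
    tendsto_natCast_atTop_atTop)).inv_tendsto_atTop

lemma tendsto_sieveCos : Tendsto sieveCos atTop (𝓝 √(1 / 3)) := by
  have h := tendsto_sieveEps.add
    ((tendsto_const_nhds (x := (1 / 3 : ℝ))).add (tendsto_sieveEps.div_const 2)).sqrt
  rwa [zero_add, zero_div, add_zero] at h

lemma eventually_four_div_le_sieveEps : ∀ᶠ d : ℕ in atTop, 4 / (d : ℝ) ≤ sieveEps d := by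
  have hlog := (Real.tendsto_pow_log_div_mul_add_atTop 1 0 2 one_ne_zero).eventually
    (gt_mem_nhds (show (0 : ℝ) < Real.log 2 ^ 2 / 4 by positivity))
  filter_upwards [tendsto_natCast_atTop_atTop.eventually hlog,
    tendsto_natCast_atTop_atTop.eventually (eventually_gt_atTop (1 : ℝ))] with d hd hd1
  have hlog0 : 0 < Real.log d := Real.log_pos hd1
  rw [one_mul, add_zero, div_lt_iff₀ (by linarith)] at hd
  rw [sieveEps, Real.logb, div_pow, inv_div, div_le_div_iff₀ (by linarith) (by positivity)]
  nlinarith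

lemma eventually_mul_add_one_sq_le_pow (C : ℝ) {r : ℝ} (hr : 1 < r) :
    ∀ᶠ n : ℕ in atTop, C * ((n : ℝ) + 1) ^ 2 ≤ r ^ n := by
  have hlim := (tendsto_pow_const_div_const_pow_of_one_lt 2 hr).eventually
    (gt_mem_nhds (show (0 : ℝ) < 1 / (4 * |C| + 1) by positivity))
  filter_upwards [hlim, eventually_ge_atTop 1] with n hn hn1
  have hrn : 0 < r ^ n := pow_pos (by linarith) n
  have hn1' : (1 : ℝ) ≤ n := by exact_mod_cast hn1
  rw [div_lt_iff₀ hrn, one_div, inv_mul_eq_div, lt_div_iff₀ (by positivity)] at hn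
  have hsq : ((n : ℝ) + 1) ^ 2 ≤ 4 * (n : ℝ) ^ 2 := by nlinarith
  nlinarith [mul_le_mul_of_nonneg_right (le_abs_self C) (sq_nonneg ((n : ℝ) + 1)),
    mul_le_mul_of_nonneg_left hsq (abs_nonneg C)]

lemma eventually_sieve_parameters : ∀ᶠ n : ℕ in atTop,
    0 < sieveEps (n + 1) ∧ 2 ≤ n * sieveEps (n + 1) ∧
      1 / 3 + sieveEps (n + 1) < 1 ∧ 1 / 2 ≤ sieveCos (n + 1) ∧
      sieveCos (n + 1) + sieveEps (n + 1) < 1 := by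
  have hε := tendsto_sieveEps.comp (tendsto_add_atTop_nat 1)
  have hc := tendsto_sieveCos.comp (tendsto_add_atTop_nat 1)
  have hsqrt : 1 / 2 < √(1 / 3 : ℝ) := (Real.lt_sqrt (by norm_num)).2 (by norm_num)
  have hsqrt' : √(1 / 3 : ℝ) < 1 := (Real.sqrt_lt' one_pos).2 (by norm_num)
  filter_upwards [(tendsto_add_atTop_nat 1).eventually eventually_four_div_le_sieveEps,
    hε.eventually_le_const (show (0 : ℝ) < 1 / 2 by norm_num),
    hc.eventually_const_le hsqrt, (hc.add hε).eventually_lt_const (by simpa using hsqrt'),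
    eventually_ge_atTop 1] with n h4 hε2 hc2 hcε hn
  simp only [Function.comp_apply] at hε2 hc2 hcε
  push_cast at h4
  have hn' : (1 : ℝ) ≤ n := by exact_mod_cast hn
  have h4' : 2 ≤ n * (4 / ((n : ℝ) + 1)) := by
    rw [mul_div_assoc', le_div_iff₀ (by positivity)]; linarith
  exact ⟨lt_of_lt_of_le (by positivity) h4, h4'.trans (by gcongr), by linarith, hc2, hcε⟩

lemma one_lt_two_rpow {η : ℝ} (hη : 0 < η) :
    1 < (2 : ℝ) ^ (1 / 4 * Real.logb 2 (27 / 16) + η) :=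
  Real.one_lt_rpow one_lt_two
    (by positivity [Real.logb_nonneg one_lt_two (show (1 : ℝ) ≤ 27 / 16 by norm_num)])

lemma tendsto_two_rpow_sq_mul_sqrt_mul_sqrt (η : ℝ) :
    Tendsto (fun n : ℕ ↦ ((2 : ℝ) ^ (1 / 4 * Real.logb 2 (27 / 16) + η)) ^ 2 *
      (√(1 - (1 / 3) ^ 2) * √(1 - sieveCos (n + 1) ^ 2))) atTop (𝓝 (((2 : ℝ) ^ η) ^ 2)) := by
  have h : ((2 : ℝ) ^ (1 / 4 * Real.logb 2 (27 / 16))) ^ 2 = √(27 / 16) := by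
    rw [← Real.rpow_mul_natCast zero_le_two, Real.sqrt_eq_rpow,
      show 1 / 4 * Real.logb 2 (27 / 16) * ((2 : ℕ) : ℝ) = Real.logb 2 (27 / 16) * (1 / 2) by
        push_cast; ring,
      Real.rpow_mul zero_le_two, Real.rpow_logb zero_lt_two (by norm_num) (by norm_num)]
  have hc : Tendsto (fun n : ℕ ↦ sieveCos (n + 1)) atTop (𝓝 √(1 / 3)) :=
    tendsto_sieveCos.comp (tendsto_add_atTop_nat 1)
  convert (((hc.pow 2).const_sub 1).sqrt.const_mul √(1 - (1 / 3) ^ 2)).const_mul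
    (((2 : ℝ) ^ (1 / 4 * Real.logb 2 (27 / 16) + η)) ^ 2) using 2
  have hone : √(1 - (1 / 3) ^ 2) * √(1 - 1 / 3) * √(27 / 16) = (1 : ℝ) := by
    rw [← Real.sqrt_mul (by norm_num), ← Real.sqrt_mul (by norm_num)]
    norm_num
  rw [Real.sq_sqrt (by norm_num), Real.rpow_add zero_lt_two, mul_pow, h]
  linear_combination (-((2 : ℝ) ^ η) ^ 2) * hone

lemma eventually_four_le_capLowerBound_mul {η : ℝ} (hη : 0 < η) : ∀ᶠ n : ℕ in atTop,
    4 ≤ capLowerBound n (1 / 3) (sieveEps (n + 1)) *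
      capLowerBound n (sieveCos (n + 1)) (sieveEps (n + 1)) *
      ((2 : ℝ) ^ ((1 / 4 * Real.logb 2 (27 / 16) + η) * ((n + 1 : ℕ) : ℝ))) ^ 2 := by
  set A : ℝ := (2 : ℝ) ^ (1 / 4 * Real.logb 2 (27 / 16) + η)
  have hA : 1 ≤ A := (one_lt_two_rpow hη).le
  have hgrowth : (2 : ℝ) ^ η < ((2 : ℝ) ^ η) ^ 2 := by
    have : 1 < (2 : ℝ) ^ η := Real.one_lt_rpow one_lt_two hη
    nlinarith
  filter_upwards [(tendsto_two_rpow_sq_mul_sqrt_mul_sqrt η).eventually_const_le hgrowth,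
    (tendsto_add_atTop_nat 1).eventually eventually_four_div_le_sieveEps,
    eventually_sieve_parameters,
    eventually_mul_add_one_sq_le_pow 96 (Real.one_lt_rpow one_lt_two hη)]
    with n hrate h4 hpar hpow
  set ε := sieveEps (n + 1)
  set c := sieveCos (n + 1)
  have hc : 1 / 2 ≤ c := hpar.2.2.2.1
  push_cast at h4
  have hM : ((2 : ℝ) ^ ((1 / 4 * Real.logb 2 (27 / 16) + η) * ((n + 1 : ℕ) : ℝ))) ^ 2 =
      (A ^ 2) ^ n * A ^ 2 := by
    rw [Real.rpow_mul_natCast zero_le_two]; ring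
  calc (4 : ℝ) ≤ 1 / 2 * (4 / ((n : ℝ) + 1)) ^ 2 * 1 / 192 * ((2 : ℝ) ^ η) ^ n := by
        rw [show 1 / 2 * (4 / ((n : ℝ) + 1)) ^ 2 * 1 / 192 * ((2 : ℝ) ^ η) ^ n =
          ((2 : ℝ) ^ η) ^ n / (24 * ((n : ℝ) + 1) ^ 2) by field_simp; ring,
          le_div_iff₀ (by positivity)]
        linarith
    _ ≤ c * ε ^ 2 * A ^ 2 / 192 * (A ^ 2 * (√(1 - (1 / 3) ^ 2) * √(1 - c ^ 2))) ^ n := by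
        gcongr
        exact one_le_pow₀ hA
    _ = _ := by rw [hM]; unfold capLowerBound; ring

lemma eventually_four_le_two_rpow {η : ℝ} (hη : 0 < η) : ∀ᶠ n : ℕ in atTop,
    4 ≤ (2 : ℝ) ^ ((1 / 4 * Real.logb 2 (27 / 16) + η) * ((n + 1 : ℕ) : ℝ)) := by
  filter_upwards [((tendsto_pow_atTop_atTop_of_one_lt (one_lt_two_rpow hη)).comp
    (tendsto_add_atTop_nat 1)).eventually_ge_atTop 4] with n hn
  rwa [Real.rpow_mul_natCast zero_le_two]

/-- With `ε_d = 1/log₂²(d)` and `c′_d = ε_d + √(1/3 + ε_d/2)`, for every `η > 0` there is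
`D` such that for all `d ≥ D` and all `m ≥ 2^{((1/4)·log₂(27/16) + η)·d}`, the expected
number of ordered solution triples `(i,j,k)` (with `x_i ≠ x_j`, `|⟨x_i,x_j⟩ − 1/3| ≤ ε_d`
and `|⟨(x_i−x_j)/‖x_i−x_j‖, x_k⟩ − c′_d| ≤ ε_d`) among `m` i.i.d. uniform samples from
`S^{d−1}` is at least `m`. -/
theorem expected_triples_ge_list_size (η : ℝ) (hη : 0 < η) :
    ∃ D : ℕ, ∀ d : ℕ, D ≤ d → ∀ m : ℕ,
      (2 : ℝ) ^ ((1 / 4 * Real.logb 2 (27 / 16) + η) * d) ≤ (m : ℝ) →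
      ∀ (σ : Measure (EuclideanSpace ℝ (Fin d))), IsUniformSphereMeasure d σ →
      ∀ (Ω : Type) (_ : MeasurableSpace Ω) (μ : Measure Ω), IsProbabilityMeasure μ →
      ∀ (x : Fin m → Ω → EuclideanSpace ℝ (Fin d)),
        (∀ i, Measurable (x i)) →
        (∀ i, Measure.map (x i) μ = σ) →
        iIndepFun x μ →
        (m : ℝ) ≤ ∫ ω, ((Finset.univ.filter (fun t : Fin m × Fin m × Fin m =>
            t.1 ≠ t.2.1 ∧ t.1 ≠ t.2.2 ∧ t.2.1 ≠ t.2.2 ∧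
            x t.1 ω ≠ x t.2.1 ω ∧
            |⟪x t.1 ω, x t.2.1 ω⟫ - 1 / 3| ≤ ((Real.logb 2 d) ^ 2)⁻¹ ∧
            |⟪‖x t.1 ω - x t.2.1 ω‖⁻¹ • (x t.1 ω - x t.2.1 ω), x t.2.2 ω⟫ -
                (((Real.logb 2 d) ^ 2)⁻¹ +
                  Real.sqrt (1 / 3 + ((Real.logb 2 d) ^ 2)⁻¹ / 2))| ≤
              ((Real.logb 2 d) ^ 2)⁻¹)).card : ℝ) ∂μ := by
  obtain ⟨N, hN⟩ := eventually_atTop.1 ((eventually_sieve_parameters.and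
    (eventually_four_le_two_rpow hη)).and (eventually_four_le_capLowerBound_mul hη))
  refine ⟨N + 1, fun d hd m hm σ hσ Ω _ μ hμ x hxm hxd hind ↦ ?_⟩
  obtain ⟨n, rfl⟩ : ∃ n, d = n + 1 := ⟨d - 1, by omega⟩
  obtain ⟨⟨⟨hε, hnε, haε, hc, hcε⟩, hM⟩, hP⟩ := hN n (by omega)
  calc (m : ℝ)
      ≤ m.descFactorial 3 * (capLowerBound n (1 / 3) (sieveEps (n + 1)) *
          capLowerBound n (sieveCos (n + 1)) (sieveEps (n + 1))) :=
        le_descFactorial_three_mul hM hm hP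
    _ ≤ m.descFactorial 3 *
          ((σ.prod σ).prod σ).real (solutionSet (1 / 3) (sieveCos (n + 1)) (sieveEps (n + 1))) := by
        gcongr
        exact capLowerBound_mul_le_measureReal_solutionSet hσ (by norm_num) haε (by linarith)
          hcε hε hnε
    _ = _ := by
        have := hμ
        convert (integral_card_distinct_triples_mem hxm hxd hind
          (measurableSet_solutionSet (1 / 3) (sieveCos (n + 1)) (sieveEps (n + 1)))).symm
        exact Iff.rfl
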